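/- (Lagrangian formulation of the δ-RPDE.) Fix integers n, m and δ ∈ ℝ. Let U be a four times continuously differentiable real function on an open set D ⊆ ℝ² where α ≠ β, ∂U/∂α ≠ 0 and ∂U/∂β ≠ 0. Define on D the functions P := (α−β)·U_{αβ}/(U_α·U_β), Q_α := −((α−β)/2)·U_{αβ}²/(U_α²·U_β) + (1/(2(α−β)))·(m²/U_β − n²·U_β/U_α²) + 2δ²·(α−β)·U_β, and Q_β := −((α−β)/2)·U_{αβ}²/(U_α·U_β²) + (1/(2(α−β)))·(−m²·U_α/U_β² + n²/U_α) + 2δ²·(α−β)·U_α, which are respectively ∂ℒ/∂U_{αβ}, ∂ℒ/∂U_α and ∂ℒ/∂U_β for the Lagrangian ℒ = ((α−β)/2)·U_{αβ}²/(U_α·U_β) + (1/(2(α−β)))·(m²·U_α/U_β + n²·U_β/U_α) + 2δ²·(α−β)·U_α·U_β. Then the Euler–Lagrange expression ∂²P/∂α∂β − ∂Q_α/∂α − ∂Q_β/∂β (all derivatives taken as derivatives of the composite functions of (α,β)) vanishes at a point of D if and only if U satisfies the δ-RPDE R(α,β,U;n,m) + 2δ²·U_α·U_β·(2·U_{αβ}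 − (U_α − U_β)/(α−β)) = 0 at that point. -/

import Mathlib

/-- Partial derivative with respect to the first variable. -/
noncomputable def pda (f : ℝ × ℝ → ℝ) (p : ℝ × ℝ) : ℝ :=
  deriv (fun x => f (x, p.2)) p.1

/-- Partial derivative with respect to the second variable. -/
noncomputable def pdb (f : ℝ × ℝ → ℝ) (p : ℝ × ℝ) : ℝ :=
  deriv (fun y => f (p.1, y)) p.2

/-- The RPDE expression R(α,β,U;n,m). -/
noncomputable def Rexpr (n m : ℤ) (U : ℝ × ℝ → ℝ) (p : ℝ × ℝ) : ℝ :=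
  let s := p.1 - p.2
  let Ua := pda U p
  let Ub := pdb U p
  let Uaa := pda (pda U) p
  let Uab := pdb (pda U) p
  let Ubb := pdb (pdb U) p
  let Uaab := pdb (pda (pda U)) p
  let Uabb := pdb (pdb (pda U)) p
  let Uaabb := pdb (pdb (pda (pda U))) p ;
  (-Uaabb
    + Uaab * (1 / s + Ubb / Ub + Uab / Ua)
    + Uabb * (1 / (-s) + Uaa / Ua + Uab / Ub)
    - Uaa * Ubb * Uab / (Ua * Ub)
    + Uaa * ((n : ℝ) ^ 2 * Ub ^ 2 / (s ^ 2 * Ua ^ 2) - Uab / (s * Ua) - Uab ^ 2 / Ua ^ 2)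
    + Ubb * ((m : ℝ) ^ 2 * Ua ^ 2 / (s ^ 2 * Ub ^ 2) + Uab / (s * Ub) - Uab ^ 2 / Ub ^ 2)
    + ((n : ℝ) ^ 2 / (2 * s ^ 3)) * (Ub / Ua) * (Ua + Ub + 2 * (-s) * Uab)
    - ((m : ℝ) ^ 2 / (2 * s ^ 3)) * (Ua / Ub) * (Ua + Ub + 2 * s * Uab)
    + (1 / (2 * s)) * Uab ^ 2 * (1 / Ua - 1 / Ub))

/-! `P`, `Q_α` and `Q_β` are rational functions of the jet of `U`, so their slice derivatives
follow from the product and quotient rules along the lines `β = const` and `α = const`; the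
derivatives of `U_β` and `U_{αβ}` in `α` are identified with `U_{αβ}` and `U_{ααβ}` by the
symmetry of second derivatives. Clearing denominators, `U_α U_β` times the Euler–Lagrange
expression equals `β - α` times the δ-RPDE expression, and both factors are nonzero on `D`. -/

open Topology

section PartialDerivatives

variable {g : ℝ × ℝ → ℝ} {p : ℝ × ℝ}

theorem hasDerivAt_pda (hg : DifferentiableAt ℝ g p) :
    HasDerivAt (fun x => g (x, p.2)) (pda g p) p.1 :=
  (hg.comp p.1 (differentiableAt_id.prodMk (differentiableAt_const p.2))).hasDerivAt

theorem hasDerivAt_pdb (hg : DifferentiableAt ℝ g p) :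
    HasDerivAt (fun y => g (p.1, y)) (pdb g p) p.2 :=
  (hg.comp p.2 ((differentiableAt_const p.1).prodMk differentiableAt_id)).hasDerivAt

theorem pda_eq_fderiv (hg : DifferentiableAt ℝ g p) : pda g p = fderiv ℝ g p (1, 0) :=
  (hasDerivAt_pda hg).unique <|
    hg.hasFDerivAt.comp_hasDerivAt p.1 ((hasDerivAt_id p.1).prodMk (hasDerivAt_const p.1 p.2))

theorem pdb_eq_fderiv (hg : DifferentiableAt ℝ g p) : pdb g p = fderiv ℝ g p (0, 1) :=
  (hasDerivAt_pdb hg).unique <|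
    hg.hasFDerivAt.comp_hasDerivAt p.2 ((hasDerivAt_const p.2 p.1).prodMk (hasDerivAt_id p.2))

theorem Filter.EventuallyEq.pda_eq {f : ℝ × ℝ → ℝ} (h : f =ᶠ[𝓝 p] g) : pda f p = pda g p :=
  (h.comp_tendsto ((continuous_id.prodMk continuous_const).tendsto' p.1 p rfl)).deriv_eq

theorem Filter.EventuallyEq.pdb_eq {f : ℝ × ℝ → ℝ} (h : f =ᶠ[𝓝 p] g) : pdb f p = pdb g p :=
  (h.comp_tendsto ((continuous_const.prodMk continuous_id).tendsto' p.2 p rfl)).deriv_eq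

theorem ContDiffAt.eventually_differentiableAt {n : WithTop ℕ∞} (hg : ContDiffAt ℝ n g p)
    (hn : 1 ≤ n) : ∀ᶠ r in 𝓝 p, DifferentiableAt ℝ g r :=
  ((hg.of_le hn).eventually (by simp)).mono fun _ hr => hr.differentiableAt one_ne_zero

theorem contDiffAt_pda {m n : WithTop ℕ∞} (hg : ContDiffAt ℝ n g p) (hmn : m + 1 ≤ n) :
    ContDiffAt ℝ m (pda g) p :=
  ((hg.fderiv_right hmn).clm_apply contDiffAt_const).congr_of_eventuallyEq <|
    (hg.eventually_differentiableAt (le_add_self.trans hmn)).mono fun _ => pda_eq_fderiv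

theorem contDiffAt_pdb {m n : WithTop ℕ∞} (hg : ContDiffAt ℝ n g p) (hmn : m + 1 ≤ n) :
    ContDiffAt ℝ m (pdb g) p :=
  ((hg.fderiv_right hmn).clm_apply contDiffAt_const).congr_of_eventuallyEq <|
    (hg.eventually_differentiableAt (le_add_self.trans hmn)).mono fun _ => pdb_eq_fderiv

theorem pda_pdb_eq_pdb_pda (hg : ContDiffAt ℝ 2 g p) : pda (pdb g) p = pdb (pda g) p := by
  have hdg := hg.eventually_differentiableAt one_le_two
  have hfd : DifferentiableAt ℝ (fderiv ℝ g) p :=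
    (hg.fderiv_right (m := 1) le_rfl).differentiableAt one_ne_zero
  have hcol : ∀ v : ℝ × ℝ, HasFDerivAt (fun r => fderiv ℝ g r v)
      ((ContinuousLinearMap.apply ℝ ℝ v).comp (fderiv ℝ (fderiv ℝ g) p)) p :=
    fun v => (ContinuousLinearMap.apply ℝ ℝ v).hasFDerivAt.comp p hfd.hasFDerivAt
  calc pda (pdb g) p = fderiv ℝ (fderiv ℝ g) p (1, 0) (0, 1) := by
        rw [Filter.EventuallyEq.pda_eq (hdg.mono fun _ => pdb_eq_fderiv),
          pda_eq_fderiv (hcol _).differentiableAt, (hcol _).fderiv]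
        rfl
    _ = fderiv ℝ (fderiv ℝ g) p (0, 1) (1, 0) := (hg.isSymmSndFDerivAt (by simp)).eq _ _
    _ = pdb (pda g) p := by
        rw [Filter.EventuallyEq.pdb_eq (hdg.mono fun _ => pda_eq_fderiv),
          pdb_eq_fderiv (hcol _).differentiableAt, (hcol _).fderiv]
        rfl

theorem hasDerivAt_pda_pdb (hg : ContDiffAt ℝ 2 g p) :
    HasDerivAt (fun x => pdb g (x, p.2)) (pdb (pda g) p) p.1 :=
  pda_pdb_eq_pdb_pda hg ▸
    hasDerivAt_pda ((contDiffAt_pdb hg le_rfl).differentiableAt one_ne_zero)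

end PartialDerivatives

section EulerLagrange

variable (n m : ℤ) (δ : ℝ) (U : ℝ × ℝ → ℝ)

/-- `rpdeP`, `rpdeQa`, `rpdeQb` are `∂ℒ/∂U_{αβ}`, `∂ℒ/∂U_α`, `∂ℒ/∂U_β` for the Lagrangian
`ℒ = ((α-β)/2) U_{αβ}² / (U_α U_β) + (m² U_α/U_β + n² U_β/U_α) / (2(α-β)) + 2δ²(α-β) U_α U_β`. -/
noncomputable def rpdeP (q : ℝ × ℝ) : ℝ :=
  (q.1 - q.2) * pdb (pda U) q / (pda U q * pdb U q)

noncomputable def rpdeQa (q : ℝ × ℝ) : ℝ :=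
  -((q.1 - q.2) / 2) * (pdb (pda U) q) ^ 2 / ((pda U q) ^ 2 * pdb U q)
    + (1 / (2 * (q.1 - q.2))) * ((m : ℝ) ^ 2 / pdb U q - (n : ℝ) ^ 2 * pdb U q / (pda U q) ^ 2)
    + 2 * δ ^ 2 * (q.1 - q.2) * pdb U q

noncomputable def rpdeQb (q : ℝ × ℝ) : ℝ :=
  -((q.1 - q.2) / 2) * (pdb (pda U) q) ^ 2 / (pda U q * (pdb U q) ^ 2)
    + (1 / (2 * (q.1 - q.2))) * (-(m : ℝ) ^ 2 * pda U q / (pdb U q) ^ 2 + (n : ℝ) ^ 2 / pda U q)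
    + 2 * δ ^ 2 * (q.1 - q.2) * pda U q

variable {n m δ U} {p : ℝ × ℝ}

theorem pda_rpdeP (hU : ContDiffAt ℝ 3 U p) (hUa : pda U p ≠ 0) (hUb : pdb U p ≠ 0) :
    pda (rpdeP U) p =
      (pdb (pda U) p + (p.1 - p.2) * pdb (pda (pda U)) p) / (pda U p * pdb U p)
      - (p.1 - p.2) * pdb (pda U) p * (pda (pda U) p * pdb U p + pda U p * pdb (pda U) p)
        / (pda U p * pdb U p) ^ 2 := by
  have hUα := contDiffAt_pda hU (m := 2) le_rfl
  have hA := hasDerivAt_pda (hUα.differentiableAt two_ne_zero)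
  have hB := hasDerivAt_pda_pdb (hU.of_le (by norm_num))
  have hM := hasDerivAt_pda_pdb hUα
  refine (((hasDerivAt_id' p.1).sub_const p.2 |>.mul hM).div (hA.mul hB)
    (mul_ne_zero hUa hUb)).deriv.trans ?_
  simp only [Pi.mul_apply, Prod.mk.eta]
  field_simp

theorem pdb_pda_rpdeP (hU : ContDiffAt ℝ 4 U p) (hUa : pda U p ≠ 0) (hUb : pdb U p ≠ 0) :
    pdb (pda (rpdeP U)) p =
      (pdb (pdb (pda U)) p - pdb (pda (pda U)) p + (p.1 - p.2) * pdb (pdb (pda (pda U))) p)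
          / (pda U p * pdb U p)
      - (pdb (pda U) p + (p.1 - p.2) * pdb (pda (pda U)) p)
          * (pdb (pda U) p * pdb U p + pda U p * pdb (pdb U) p) / (pda U p * pdb U p) ^ 2
      - (((p.1 - p.2) * pdb (pdb (pda U)) p - pdb (pda U) p)
            * (pda (pda U) p * pdb U p + pda U p * pdb (pda U) p)
          + (p.1 - p.2) * pdb (pda U) p * (pdb (pda (pda U)) p * pdb U p
            + pda (pda U) p * pdb (pdb U) p + pdb (pda U) p ^ 2 + pda U p * pdb (pdb (pda U)) p))
          / (pda U p * pdb U p) ^ 2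
      + 2 * (p.1 - p.2) * pdb (pda U) p * (pda (pda U) p * pdb U p + pda U p * pdb (pda U) p)
          * (pdb (pda U) p * pdb U p + pda U p * pdb (pdb U) p) / (pda U p * pdb U p) ^ 3 := by
  have hUα := contDiffAt_pda hU (m := 3) le_rfl
  have hUβ := contDiffAt_pdb hU (m := 3) le_rfl
  have hUαα := contDiffAt_pda hUα (m := 2) le_rfl
  have hUαβ := contDiffAt_pdb hUα (m := 2) le_rfl
  have hUααβ := contDiffAt_pdb hUαα (m := 1) le_rfl
  have hev : pda (rpdeP U) =ᶠ[𝓝 p] _ :=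
    ((hU.eventually (by simp)).and ((hUα.continuousAt.eventually_ne hUa).and
      (hUβ.continuousAt.eventually_ne hUb))).mono fun q ⟨hq, hqa, hqb⟩ =>
        pda_rpdeP (hq.of_le (by norm_num)) hqa hqb
  have hA := hasDerivAt_pdb (hUα.differentiableAt (by simp))
  have hB := hasDerivAt_pdb (hUβ.differentiableAt (by simp))
  have hC := hasDerivAt_pdb (hUαα.differentiableAt (by simp))
  have hM := hasDerivAt_pdb (hUαβ.differentiableAt (by simp))
  have hT := hasDerivAt_pdb (hUααβ.differentiableAt (by simp))
  have hs := (hasDerivAt_id' p.2).const_sub p.1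
  have hAB := mul_ne_zero hUa hUb
  refine hev.pdb_eq.trans ((((hM.add (hs.mul hT)).div (hA.mul hB) hAB).sub
    (((hs.mul hM).mul ((hC.mul hB).add (hA.mul hM))).div ((hA.mul hB).pow 2)
      (pow_ne_zero 2 hAB))).deriv.trans ?_)
  simp only [Pi.add_apply, Pi.mul_apply, Pi.pow_apply, Prod.mk.eta]
  field_simp
  ring

theorem pda_rpdeQa (hU : ContDiffAt ℝ 3 U p) (hαβ : p.1 ≠ p.2) (hUa : pda U p ≠ 0)
    (hUb : pdb U p ≠ 0) :
    pda (rpdeQa n m δ U) p =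
      -(pdb (pda U) p ^ 2 / (2 * pda U p ^ 2 * pdb U p))
      - (p.1 - p.2) * pdb (pda U) p * pdb (pda (pda U)) p / (pda U p ^ 2 * pdb U p)
      + (p.1 - p.2) * pdb (pda U) p ^ 2 * (2 * pdb U p * pda (pda U) p + pda U p * pdb (pda U) p)
          / (2 * pda U p ^ 3 * pdb U p ^ 2)
      - ((m : ℝ) ^ 2 / pdb U p - (n : ℝ) ^ 2 * pdb U p / pda U p ^ 2) / (2 * (p.1 - p.2) ^ 2)
      - ((m : ℝ) ^ 2 * pdb (pda U) p / pdb U p ^ 2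
          + (n : ℝ) ^ 2 * (pda U p * pdb (pda U) p - 2 * pdb U p * pda (pda U) p) / pda U p ^ 3)
          / (2 * (p.1 - p.2))
      + 2 * δ ^ 2 * (pdb U p + (p.1 - p.2) * pdb (pda U) p) := by
  have hUα := contDiffAt_pda hU (m := 2) le_rfl
  have hA := hasDerivAt_pda (hUα.differentiableAt two_ne_zero)
  have hB := hasDerivAt_pda_pdb (hU.of_le (by norm_num))
  have hM := hasDerivAt_pda_pdb hUα
  have hs := (hasDerivAt_id' p.1).sub_const p.2
  have hs0 := sub_ne_zero.2 hαβ
  refine ((((hs.div_const 2).neg.mul (hM.pow 2)).div ((hA.pow 2).mul hB)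
      (mul_ne_zero (pow_ne_zero 2 hUa) hUb)).add
    (((hasDerivAt_const _ 1).div (hs.const_mul 2) (mul_ne_zero two_ne_zero hs0)).mul
      (((hasDerivAt_const _ _).div hB hUb).sub ((hB.const_mul _).div (hA.pow 2)
        (pow_ne_zero 2 hUa))))).add
    ((hs.const_mul (2 * δ ^ 2)).mul hB) |>.deriv.trans ?_
  simp only [Pi.sub_apply, Pi.mul_apply, Pi.div_apply, Pi.pow_apply, Pi.neg_apply, Prod.mk.eta]
  field_simp
  ring

theorem pdb_rpdeQb (hU : ContDiffAt ℝ 3 U p) (hαβ : p.1 ≠ p.2) (hUa : pda U p ≠ 0)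
    (hUb : pdb U p ≠ 0) :
    pdb (rpdeQb n m δ U) p =
      pdb (pda U) p ^ 2 / (2 * pda U p * pdb U p ^ 2)
      - (p.1 - p.2) * pdb (pda U) p * pdb (pdb (pda U)) p / (pda U p * pdb U p ^ 2)
      + (p.1 - p.2) * pdb (pda U) p ^ 2 * (pdb U p * pdb (pda U) p + 2 * pda U p * pdb (pdb U) p)
          / (2 * pda U p ^ 2 * pdb U p ^ 3)
      + ((n : ℝ) ^ 2 / pda U p - (m : ℝ) ^ 2 * pda U p / pdb U p ^ 2) / (2 * (p.1 - p.2) ^ 2)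
      - ((m : ℝ) ^ 2 * (pdb U p * pdb (pda U) p - 2 * pda U p * pdb (pdb U) p) / pdb U p ^ 3
          + (n : ℝ) ^ 2 * pdb (pda U) p / pda U p ^ 2)
          / (2 * (p.1 - p.2))
      + 2 * δ ^ 2 * ((p.1 - p.2) * pdb (pda U) p - pda U p) := by
  have hUα := contDiffAt_pda hU (m := 2) le_rfl
  have hA := hasDerivAt_pdb (hUα.differentiableAt two_ne_zero)
  have hB := hasDerivAt_pdb ((contDiffAt_pdb hU (m := 2) le_rfl).differentiableAt two_ne_zero)
  have hM := hasDerivAt_pdb ((contDiffAt_pdb hUα (m := 1) le_rfl).differentiableAt one_ne_zero)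
  have hs := (hasDerivAt_id' p.2).const_sub p.1
  have hs0 := sub_ne_zero.2 hαβ
  refine ((((hs.div_const 2).neg.mul (hM.pow 2)).div (hA.mul (hB.pow 2))
      (mul_ne_zero hUa (pow_ne_zero 2 hUb))).add
    (((hasDerivAt_const _ 1).div (hs.const_mul 2) (mul_ne_zero two_ne_zero hs0)).mul
      (((hA.const_mul _).div (hB.pow 2) (pow_ne_zero 2 hUb)).add
        ((hasDerivAt_const _ _).div hA hUa)))).add
    ((hs.const_mul (2 * δ ^ 2)).mul hA) |>.deriv.trans ?_
  simp only [Pi.add_apply, Pi.mul_apply, Pi.div_apply, Pi.pow_apply, Pi.neg_apply, Prod.mk.eta]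
  field_simp
  ring

theorem eulerLagrange_mul_eq (hU : ContDiffAt ℝ 4 U p) (hαβ : p.1 ≠ p.2) (hUa : pda U p ≠ 0)
    (hUb : pdb U p ≠ 0) :
    (pdb (pda (rpdeP U)) p - pda (rpdeQa n m δ U) p - pdb (rpdeQb n m δ U) p)
        * (pda U p * pdb U p) =
      (p.2 - p.1) * (Rexpr n m U p + 2 * δ ^ 2 * pda U p * pdb U p *
        (2 * pdb (pda U) p - (pda U p - pdb U p) / (p.1 - p.2))) := by
  have hU3 : ContDiffAt ℝ 3 U p := hU.of_le (by norm_num)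
  rw [pdb_pda_rpdeP hU hUa hUb, pda_rpdeQa hU3 hαβ hUa hUb, pdb_rpdeQb hU3 hαβ hUa hUb, Rexpr]
  have hs := sub_ne_zero.2 hαβ
  field_simp
  ring

end EulerLagrange

theorem EulerLagrange_iff_deltaRPDE
    (n m : ℤ) (δ : ℝ) (U : ℝ × ℝ → ℝ)
    (D : Set (ℝ × ℝ)) (hD : IsOpen D)
    (hαβ : ∀ p ∈ D, p.1 ≠ p.2)
    (hUa : ∀ p ∈ D, pda U p ≠ 0) (hUb : ∀ p ∈ D, pdb U p ≠ 0)
    (hU : ContDiffOn ℝ 4 U D)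
    (P Qa Qb : ℝ × ℝ → ℝ)
    (hP : ∀ q, P q = (q.1 - q.2) * pdb (pda U) q / (pda U q * pdb U q))
    (hQa : ∀ q, Qa q =
      -((q.1 - q.2) / 2) * (pdb (pda U) q) ^ 2 / ((pda U q) ^ 2 * pdb U q)
      + (1 / (2 * (q.1 - q.2))) *
          ((m : ℝ) ^ 2 / pdb U q - (n : ℝ) ^ 2 * pdb U q / (pda U q) ^ 2)
      + 2 * δ ^ 2 * (q.1 - q.2) * pdb U q)
    (hQb : ∀ q, Qb q =
      -((q.1 - q.2) / 2) * (pdb (pda U) q) ^ 2 / (pda U q * (pdb U q) ^ 2)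
      + (1 / (2 * (q.1 - q.2))) *
          (-(m : ℝ) ^ 2 * pda U q / (pdb U q) ^ 2 + (n : ℝ) ^ 2 / pda U q)
      + 2 * δ ^ 2 * (q.1 - q.2) * pda U q) :
    ∀ p ∈ D,
      (pdb (pda P) p - pda Qa p - pdb Qb p = 0 ↔
        Rexpr n m U p + 2 * δ ^ 2 * pda U p * pdb U p *
          (2 * pdb (pda U) p - (pda U p - pdb U p) / (p.1 - p.2)) = 0) := by
  obtain rfl : P = rpdeP U := funext hP
  obtain rfl : Qa = rpdeQa n m δ U := funext hQa
  obtain rfl : Qb = rpdeQb n m δ U := funext hQb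
  intro p hp
  rw [← mul_eq_zero_iff_right (mul_ne_zero (hUa p hp) (hUb p hp)),
    eulerLagrange_mul_eq (hU.contDiffAt (hD.mem_nhds hp)) (hαβ p hp) (hUa p hp) (hUb p hp),
    mul_eq_zero_iff_left (sub_ne_zero.2 (hαβ p hp).symm)]
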